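/- arXiv:math-ph/0602036 — 2 statements merged into one kernel-verified Lean document; each statement's English description precedes it below -/
import Mathlib

section
/- Let K be a field extension of the complex numbers ℂ. If the dimension of K as a ℂ-vector space is at most countable, then K = ℂ. -/
/-! If `x ∈ K` were transcendental over `ℂ`, the elements `(x - a)⁻¹`, `a ∈ ℂ`, would be linearly
independent, so `dim_ℂ K ≥ #ℂ = 𝔠 > ℵ₀`. Hence `K / ℂ` is algebraic, and `ℂ` is algebraically
closed. -/

open Cardinal

universe u v

theorem Algebra.IsAlgebraic.of_lift_rank_lt_lift_mk {F : Type u} {E : Type v} [Field F] [Field E]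
    [Algebra F E] (h : lift.{u} (Module.rank F E) < lift.{v} #F) : Algebra.IsAlgebraic F E :=
  ⟨fun _ ↦ of_not_not fun hx ↦
    h.not_ge (Transcendental.linearIndependent_sub_inv hx).cardinal_lift_le_rank⟩

/-- Let `K` be a field extension of the complex numbers `ℂ`. If the dimension of `K` as a
`ℂ`-vector space is at most countable, then `K = ℂ` (i.e. the embedding `ℂ → K` is surjective). -/
theorem stmt_0 (K : Type*) [Field K] [Algebra ℂ K]
    (h : Module.rank ℂ K ≤ Cardinal.aleph0) :
    Function.Surjective (algebraMap ℂ K) := by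
  have hlt : lift.{0} (Module.rank ℂ K) < lift #ℂ := by
    rw [lift_uzero, mk_complex, lift_continuum]
    exact h.trans_lt aleph0_lt_continuum
  have := Algebra.IsAlgebraic.of_lift_rank_lt_lift_mk hlt
  exact IsAlgClosed.algebraMap_bijective_of_isIntegral.2
end

section
/- The only Lorentz-invariant Borel probability measure on Minkowski space ℝ⁴ is the Dirac measure at the origin. -/
/-!
A boost of rapidity `r` in the `(x₀, xᵢ)`-plane multiplies the light-cone coordinates `x₀ + xᵢ`
and `x₀ - xᵢ` by `eʳ` and `e⁻ʳ`. If a finite measure is invariant under a map that multiplies a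
function `f` by a constant `c > 1`, then `{t < |f|}` has the same mass as `{cⁿ t < |f|}` for
every `n`; these sets shrink to `∅`, so the measure is carried by `{f = 0}`. A Lorentz-invariant
finite measure is therefore carried by the common zeros of all `x₀ ± xᵢ`, i.e. by the origin.
-/

open MeasureTheory Set Function Real

section ScalingFunction

variable {α : Type*} [MeasurableSpace α] {μ : Measure α} {T : α → α} {f : α → ℝ} {c : ℝ}

theorem measure_lt_abs_eq_measure_mul_lt_abs_of_comp_eq_mul
    (hT : ∀ S, MeasurableSet S → μ (T ⁻¹' S) = μ S) (hf : Measurable f) (hc : 0 < c)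
    (hfT : ∀ x, f (T x) = c * f x) (t : ℝ) :
    μ {x | t < |f x|} = μ {x | c * t < |f x|} := by
  rw [← hT {x | c * t < |f x|} (measurableSet_lt measurable_const hf.abs)]
  congr 1
  ext x
  simp [hfT, abs_mul, abs_of_pos hc, mul_lt_mul_iff_right₀ hc]

theorem measure_lt_abs_eq_zero_of_comp_eq_mul [IsFiniteMeasure μ]
    (hT : ∀ S, MeasurableSet S → μ (T ⁻¹' S) = μ S) (hf : Measurable f) (hc : 1 < c)
    (hfT : ∀ x, f (T x) = c * f x) {t : ℝ} (ht : 0 < t) :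
    μ {x | t < |f x|} = 0 := by
  set s : ℕ → Set α := fun n => {x | c ^ n * t < |f x|}
  have hs_eq (n : ℕ) : μ (s n) = μ {x | t < |f x|} := by
    induction n with
    | zero => simp [s]
    | succ n ih =>
      rw [← ih]
      simp only [s, pow_succ', mul_assoc,
        ← measure_lt_abs_eq_measure_mul_lt_abs_of_comp_eq_mul hT hf (one_pos.trans hc) hfT]
  have hs_anti : Antitone s := fun m n hmn x hx =>
    lt_of_le_of_lt (mul_le_mul_of_nonneg_right (pow_le_pow_right₀ hc.le hmn) ht.le) hx
  have hs_empty : ⋂ n, s n = ∅ := by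
    refine eq_empty_of_forall_notMem fun x hx => ?_
    obtain ⟨n, hn⟩ := pow_unbounded_of_one_lt (|f x| / t) hc
    exact (mem_iInter.mp hx n).not_gt ((div_lt_iff₀ ht).mp hn)
  have hs_meas (n : ℕ) : NullMeasurableSet (s n) μ :=
    (measurableSet_lt measurable_const hf.abs).nullMeasurableSet
  calc μ {x | t < |f x|} = ⨅ n, μ (s n) := by simp only [hs_eq, iInf_const]
    _ = 0 := by
      rw [← hs_anti.measure_iInter hs_meas ⟨0, measure_ne_top μ _⟩, hs_empty, measure_empty]

theorem measure_support_eq_zero_of_comp_eq_mul [IsFiniteMeasure μ]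
    (hT : ∀ S, MeasurableSet S → μ (T ⁻¹' S) = μ S) (hf : Measurable f) (hc : 1 < c)
    (hfT : ∀ x, f (T x) = c * f x) :
    μ (support f) = 0 := by
  have hcover : support f ⊆ ⋃ n : ℕ, {x | 1 / ((n : ℝ) + 1) < |f x|} := fun x hx =>
    mem_iUnion.mpr (exists_nat_one_div_lt (abs_pos.mpr hx))
  exact measure_mono_null hcover <| measure_iUnion_null fun _ =>
    measure_lt_abs_eq_zero_of_comp_eq_mul hT hf hc hfT Nat.one_div_pos_of_nat

end ScalingFunction

theorem MeasureTheory.Measure.eq_dirac_of_measure_compl_singleton {α : Type*} [MeasurableSpace α]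
    [MeasurableSingletonClass α] {μ : Measure α} [IsProbabilityMeasure μ] {a : α}
    (h : μ {a}ᶜ = 0) : μ = Measure.dirac a := by
  have hμa : μ {a} = 1 := (prob_compl_eq_zero_iff (measurableSet_singleton a)).mp h
  have hae : ∀ᵐ x ∂μ, x ∈ ({a} : Set α) := measure_eq_zero_iff_ae_notMem.mp h |>.mono
    fun x hx => by simpa using hx
  rw [← Measure.restrict_eq_self_of_ae_mem hae, Measure.restrict_singleton, hμa, one_smul]

def minkowskiForm (x : Fin 4 → ℝ) : ℝ := x 0 ^ 2 - x 1 ^ 2 - x 2 ^ 2 - x 3 ^ 2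

def IsLorentzInvariant (μ : Measure (Fin 4 → ℝ)) : Prop :=
  ∀ Λ : (Fin 4 → ℝ) ≃ₗ[ℝ] (Fin 4 → ℝ), (∀ x, minkowskiForm (Λ x) = minkowskiForm x) →
    ∀ S, MeasurableSet S → μ (Λ '' S) = μ S

noncomputable def boost (i : Fin 4) (r : ℝ) : (Fin 4 → ℝ) →ₗ[ℝ] (Fin 4 → ℝ) where
  toFun x j := if j = 0 then cosh r * x 0 + sinh r * x i
    else if j = i then sinh r * x 0 + cosh r * x i else x j
  map_add' x y := by
    funext j
    simp only [Pi.add_apply]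
    split_ifs <;> ring
  map_smul' a x := by
    funext j
    simp only [Pi.smul_apply, smul_eq_mul, RingHom.id_apply]
    split_ifs <;> ring

section boost

variable {i : Fin 4}

theorem boost_apply (i : Fin 4) (r : ℝ) (x : Fin 4 → ℝ) (j : Fin 4) :
    boost i r x j = if j = 0 then cosh r * x 0 + sinh r * x i
      else if j = i then sinh r * x 0 + cosh r * x i else x j := rfl

theorem boost_zero (i : Fin 4) (x : Fin 4 → ℝ) : boost i 0 x = x := by
  funext j
  simp only [boost_apply, cosh_zero, sinh_zero]
  split_ifs <;> simp_all

theorem boost_boost (hi : i ≠ 0) (r s : ℝ) (x : Fin 4 → ℝ) :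
    boost i r (boost i s x) = boost i (r + s) x := by
  funext j
  simp only [boost_apply, hi, if_false, if_true, cosh_add, sinh_add]
  split_ifs <;> ring

theorem boost_apply_zero_add_boost_apply (hi : i ≠ 0) (r : ℝ) (x : Fin 4 → ℝ) :
    boost i r x 0 + boost i r x i = exp r * (x 0 + x i) := by
  simp only [boost_apply, hi, if_false, if_true, ← cosh_add_sinh]
  ring

theorem boost_apply_zero_sub_boost_apply (hi : i ≠ 0) (r : ℝ) (x : Fin 4 → ℝ) :
    boost i r x 0 - boost i r x i = exp (-r) * (x 0 - x i) := by
  simp only [boost_apply, hi, if_false, if_true, ← cosh_sub_sinh]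
  ring

theorem minkowskiForm_boost (hi : i ≠ 0) (r : ℝ) (x : Fin 4 → ℝ) :
    minkowskiForm (boost i r x) = minkowskiForm x := by
  have hplane : (cosh r * x 0 + sinh r * x i) ^ 2 - (sinh r * x 0 + cosh r * x i) ^ 2
      = x 0 ^ 2 - x i ^ 2 := by
    linear_combination (x 0 ^ 2 - x i ^ 2) * cosh_sq_sub_sinh_sq r
  fin_cases i
  · exact absurd rfl hi
  all_goals simp [minkowskiForm, boost_apply] at hplane ⊢; linarith

noncomputable def boostEquiv (hi : i ≠ 0) (r : ℝ) : (Fin 4 → ℝ) ≃ₗ[ℝ] (Fin 4 → ℝ) :=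
  .ofLinearMap (boost i r) (boost i (-r))
    (LinearMap.ext fun x => by simp [boost_boost hi, boost_zero])
    (LinearMap.ext fun x => by simp [boost_boost hi, boost_zero])

end boost

namespace IsLorentzInvariant

variable {μ : Measure (Fin 4 → ℝ)} {i : Fin 4}

theorem measure_preimage_boost (hμ : IsLorentzInvariant μ) (hi : i ≠ 0) (r : ℝ)
    {S : Set (Fin 4 → ℝ)} (hS : MeasurableSet S) : μ (boost i r ⁻¹' S) = μ S := by
  have hΛ := hμ (boostEquiv hi r).symm (minkowskiForm_boost hi (-r)) S hS
  rwa [LinearEquiv.image_eq_preimage_symm, LinearEquiv.symm_symm] at hΛ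

theorem measure_support_add [IsFiniteMeasure μ] (hμ : IsLorentzInvariant μ) (hi : i ≠ 0) :
    μ (support fun x => x 0 + x i) = 0 :=
  measure_support_eq_zero_of_comp_eq_mul (fun _ => hμ.measure_preimage_boost hi 1) (by fun_prop)
    (one_lt_exp_iff.mpr one_pos) (boost_apply_zero_add_boost_apply hi 1)

theorem measure_support_sub [IsFiniteMeasure μ] (hμ : IsLorentzInvariant μ) (hi : i ≠ 0) :
    μ (support fun x => x 0 - x i) = 0 :=
  measure_support_eq_zero_of_comp_eq_mul (fun _ => hμ.measure_preimage_boost hi (-1))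
    (by fun_prop) (one_lt_exp_iff.mpr one_pos)
    (by simpa using boost_apply_zero_sub_boost_apply hi (-1))

theorem measure_compl_singleton_zero [IsFiniteMeasure μ] (hμ : IsLorentzInvariant μ) :
    μ {0}ᶜ = 0 := by
  have hcover : ({0}ᶜ : Set (Fin 4 → ℝ)) ⊆ ⋃ i : {i : Fin 4 // i ≠ 0},
      (support (fun x => x 0 + x i) ∪ support fun x => x 0 - x i) := by
    intro x hx
    by_contra hcon
    simp only [mem_iUnion, mem_union, mem_support, not_exists, not_or, not_not] at hcon
    have hx₀ : x 0 = 0 := by linarith [hcon ⟨1, by decide⟩]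
    refine hx (funext fun j => ?_)
    rcases eq_or_ne j 0 with rfl | hj
    · exact hx₀
    · rw [Pi.zero_apply]
      linarith [hcon ⟨j, hj⟩]
  exact measure_mono_null hcover <| measure_iUnion_null fun i =>
    measure_union_null (hμ.measure_support_add i.2) (hμ.measure_support_sub i.2)

end IsLorentzInvariant

/-- The only Lorentz-invariant Borel probability measure on Minkowski space `ℝ⁴` is the Dirac
measure at the origin.  A linear automorphism `Λ` of `ℝ⁴` is a (homogeneous) Lorentz
transformation when it preserves the Minkowski quadratic form
`x₀² − x₁² − x₂² − x₃²`, and `μ` is Lorentz invariant when `μ(Λ(S)) = μ(S)` for every Borel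
set `S` and every Lorentz transformation `Λ`. -/
theorem stmt_11 (μ : MeasureTheory.Measure (Fin 4 → ℝ))
    [MeasureTheory.IsProbabilityMeasure μ]
    (h : ∀ Λ : (Fin 4 → ℝ) ≃ₗ[ℝ] (Fin 4 → ℝ),
      (∀ x : Fin 4 → ℝ,
        (Λ x 0) ^ 2 - (Λ x 1) ^ 2 - (Λ x 2) ^ 2 - (Λ x 3) ^ 2
          = (x 0) ^ 2 - (x 1) ^ 2 - (x 2) ^ 2 - (x 3) ^ 2) →
      ∀ S : Set (Fin 4 → ℝ), MeasurableSet S → μ ((fun x => Λ x) '' S) = μ S) :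
    μ = MeasureTheory.Measure.dirac 0 :=
  Measure.eq_dirac_of_measure_compl_singleton (IsLorentzInvariant.measure_compl_singleton_zero h)
end
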